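/- For every rooted tree t with pairwise distinct leaf labels and all label sets S ⊆ S', the counter is monotone: counter_S(v) ≤ counter_{S'}(v) for every vertex v of t. In particular, a vertex that is complete with respect to S remains complete with respect to S'. -/

import Mathlib

/-!
With distinct leaf labels, `counter_S(v) ≤ |L(v)|`, and `v` is complete with respect to `S`
exactly when `L(v) ⊆ S`: the counter of an internal vertex is a sum of terms each bounded by
`|L(w)|`, and `|L(v)| = ∑ |L(w)|`, so equality forces every child to be complete. Thus
`counter_S(v) = ∑_{L(w) ⊆ S} |L(w)|` over the children `w`, which is visibly monotone in `S`.
-/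

inductive RTree (α : Type*) where
  | leaf (a : α)
  | node (children : List (RTree α))

namespace RTree

variable {α : Type*} [DecidableEq α]

/-- The list of leaf labels of a tree. -/
def leafList : RTree α → List α
  | leaf a => [a]
  | node cs => (cs.attach.map fun ⟨w, _⟩ => leafList w).flatten
decreasing_by have := List.sizeOf_lt_of_mem ‹_›; simp only [node.sizeOf_spec]; omega

/-- `L v` is the finite set of labels of leaves in the subtree rooted at `v`. -/
def L (v : RTree α) : Finset α := (leafList v).toFinset

/-- The counter function. -/
def counter (S : Finset α) : RTree α → ℕ
  | leaf a => if a ∈ S then 1 else 0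
  | node cs =>
      (cs.attach.map fun ⟨w, _⟩ =>
        if counter S w = (L w).card then counter S w else 0).sum
decreasing_by have := List.sizeOf_lt_of_mem ‹_›; simp only [node.sizeOf_spec]; omega

/-- `IsVertex v t` means that `v` is a vertex (subtree) of `t`. -/
inductive IsVertex : RTree α → RTree α → Prop
  | refl (t : RTree α) : IsVertex t t
  | child {v w : RTree α} {cs : List (RTree α)} : w ∈ cs → IsVertex v w → IsVertex v (node cs)

/-- The list of all vertices (subtrees) of a tree. -/
def vertexList : RTree α → List (RTree α)
  | leaf a => [leaf a]
  | node cs => node cs :: (cs.attach.map fun ⟨w, _⟩ => vertexList w).flatten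
decreasing_by have := List.sizeOf_lt_of_mem ‹_›; simp only [node.sizeOf_spec]; omega

end RTree

theorem List.sum_map_eq_sum_map_iff_of_le {ι M : Type*} [AddCommMonoid M] [PartialOrder M]
    [IsOrderedCancelAddMonoid M] {l : List ι} {f g : ι → M} (hle : ∀ i ∈ l, f i ≤ g i) :
    (l.map f).sum = (l.map g).sum ↔ ∀ i ∈ l, f i = g i := by
  refine ⟨fun heq => ?_, fun h => congrArg List.sum (List.map_congr_left h)⟩
  by_contra! hne
  obtain ⟨i, hi, hfg⟩ := hne
  exact (List.sum_lt_sum f g hle ⟨i, hi, (hle i hi).lt_of_ne hfg⟩).ne heq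

namespace RTree

variable {α : Type*}

theorem leafList_node (cs : List (RTree α)) :
    (node cs).leafList = (cs.map leafList).flatten := by
  rw [leafList, List.map_attach_eq_pmap]
  simp

theorem IsVertex.leafList_sublist {v t : RTree α} (h : IsVertex v t) :
    v.leafList.Sublist t.leafList := by
  induction h with
  | refl => exact List.Sublist.refl _
  | child hw _ ih =>
    rw [leafList_node]
    exact ih.trans (List.sublist_flatten_of_mem (List.mem_map_of_mem hw))

theorem nodup_leafList_of_mem {cs : List (RTree α)} {w : RTree α}
    (hnd : (node cs).leafList.Nodup) (hw : w ∈ cs) : w.leafList.Nodup :=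
  (IsVertex.child hw (.refl w)).leafList_sublist.nodup hnd

variable [DecidableEq α]

theorem counter_leaf (S : Finset α) (a : α) : counter S (leaf a) = if a ∈ S then 1 else 0 := by
  rw [counter]

theorem counter_node (S : Finset α) (cs : List (RTree α)) :
    counter S (node cs) =
      (cs.map fun w => if counter S w = (L w).card then counter S w else 0).sum := by
  rw [counter]
  simp

theorem L_leaf (a : α) : L (leaf a) = {a} := by
  simp [L, leafList]

theorem card_L_eq_length {v : RTree α} (hnd : v.leafList.Nodup) :
    (L v).card = v.leafList.length :=
  List.toFinset_card_of_nodup hnd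

theorem card_L_node {cs : List (RTree α)} (hnd : (node cs).leafList.Nodup) :
    (L (node cs)).card = (cs.map fun w => (L w).card).sum := by
  rw [card_L_eq_length hnd, leafList_node, List.length_flatten, List.map_map]
  congr 1
  exact List.map_congr_left fun w hw => (card_L_eq_length (nodup_leafList_of_mem hnd hw)).symm

theorem L_node_subset_iff {cs : List (RTree α)} {S : Finset α} :
    L (node cs) ⊆ S ↔ ∀ w ∈ cs, L w ⊆ S := by
  simp only [L, Finset.subset_iff, List.mem_toFinset, leafList_node, List.mem_flatten,
    List.mem_map]
  grind

theorem counter_le_card (S : Finset α) {v : RTree α} (hnd : v.leafList.Nodup) :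
    counter S v ≤ (L v).card := by
  cases v with
  | leaf a =>
    rw [counter_leaf, L_leaf, Finset.card_singleton]
    split_ifs <;> omega
  | node cs =>
    rw [counter_node, card_L_node hnd]
    exact List.sum_le_sum fun w _ => by split_ifs <;> omega

theorem counter_eq_card_iff (S : Finset α) :
    ∀ {v : RTree α}, v.leafList.Nodup → (counter S v = (L v).card ↔ L v ⊆ S)
  | leaf a, _ => by
    rw [counter_leaf, L_leaf, Finset.card_singleton, Finset.singleton_subset_iff]
    split_ifs <;> simp [*]
  | node cs, hnd => by
    have hchild : ∀ w ∈ cs,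
        (if counter S w = (L w).card then counter S w else 0) = (L w).card ↔ L w ⊆ S := by
      intro w hw
      have hw_nd := nodup_leafList_of_mem hnd hw
      have hle := counter_le_card S hw_nd
      rw [← counter_eq_card_iff S hw_nd]
      split_ifs <;> omega
    rw [counter_node, card_L_node hnd, L_node_subset_iff,
      List.sum_map_eq_sum_map_iff_of_le fun w _ => by split_ifs <;> omega]
    exact forall₂_congr hchild
decreasing_by have := List.sizeOf_lt_of_mem hw; simp only [node.sizeOf_spec]; omega

theorem counter_eq_card_of_subset {S S' : Finset α} (hss : S ⊆ S') {v : RTree α}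
    (hnd : v.leafList.Nodup) (hS : counter S v = (L v).card) : counter S' v = (L v).card :=
  (counter_eq_card_iff S' hnd).2 (((counter_eq_card_iff S hnd).1 hS).trans hss)

theorem counter_mono_of_nodup {S S' : Finset α} (hss : S ⊆ S') {v : RTree α}
    (hnd : v.leafList.Nodup) : counter S v ≤ counter S' v := by
  cases v with
  | leaf a =>
    by_cases h : a ∈ S
    · simp [counter_leaf, h, hss h]
    · simp [counter_leaf, h]
  | node cs =>
    rw [counter_node, counter_node]
    refine List.sum_le_sum fun w hw => ?_
    have hw_nd := nodup_leafList_of_mem hnd hw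
    by_cases hS : counter S w = (L w).card
    · simp [hS, counter_eq_card_of_subset hss hw_nd hS]
    · simp [hS]

/-- the counter is monotone: if `S ⊆ S'` then `counter_S(v) ≤ counter_{S'}(v)`;
in particular a vertex complete with respect to `S` remains complete with respect to `S'`. -/
theorem counter_mono (t : RTree α) (hnd : t.leafList.Nodup)
    (S S' : Finset α) (hss : S ⊆ S') (v : RTree α) (hv : IsVertex v t) :
    counter S v ≤ counter S' v ∧
      (counter S v = (L v).card → counter S' v = (L v).card) := by
  have hv_nd : v.leafList.Nodup := hv.leafList_sublist.nodup hnd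
  exact ⟨counter_mono_of_nodup hss hv_nd, counter_eq_card_of_subset hss hv_nd⟩

end RTree
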